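/- arXiv:2302.07548 — 4 statements merged into one kernel-verified Lean document; each statement's English description precedes it below -/
import Mathlib

section
/- Let Δ ∈ ℤ[[q]] be the discriminant power series (defined by truncated products as in the context). Then the mod-2 reduction of Δ equals Σ_{n≥1} q^{(2n−1)²}; equivalently, for every m ≥ 1 the coefficient of q^m in Δ is odd if and only if m = d² for some odd natural number d (and the constant coefficient of Δ is 0, which is even). -/
/-!
Modulo 2, `(1 - q^n)^24 = (1 - q^(8n))^3`, so `Δ ≡ q · E(q^8)^3` with `E(q) = ∏ (1 - q^n)`;
as `8 · n(n+1)/2 + 1 = (2n+1)^2`, it suffices to show `E(q)^3 ≡ ∑_{n ≥ 0} q^(n(n+1)/2)`.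
By Frobenius, `E(q)^3 = E(q)^2 E(q) ≡ E(q^4) · ∏_{n ≥ 1} (1 + q^(2n-1))`, and Jacobi's triple
product with base `q^4` turns this into `∑_{k ∈ ℤ} q^(2k^2+k)`, the triangular-number series.
Everything is done with finite products modulo `q^(N+1)`: the triple product comes out of
Cauchy's `q`-binomial theorem for `∏_{i<2M} (q^(4M) + q^(4i+3))`, because the Gaussian binomial
`[2M, j]` in base `q^4` times `∏_{i=1}^{M} (1 - q^(4i))` is `1` modulo `q^(4 (min j (2M-j) + 1))`.
-/

open scoped Classical

/-- The discriminant power series `Δ ∈ ℤ[[q]]`: its coefficient of `q^m` is the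
coefficient of `q^m` in the polynomial `q · ∏_{n=1}^{m} (1 - q^n)^24`. -/
noncomputable def Delta : PowerSeries ℤ :=
  PowerSeries.mk fun m =>
    (Polynomial.X * ∏ n ∈ Finset.Icc 1 m, (1 - Polynomial.X ^ n) ^ 24 : Polynomial ℤ).coeff m

open Polynomial Finset

section Congruence

variable {A : Type*} [CommRing A]

theorem pow_smodEq_zero {q : A} {m n : ℕ} (h : m ≤ n) :
    q ^ n ≡ 0 [SMOD Ideal.span {q ^ m}] :=
  SModEq.zero.mpr (Ideal.mem_span_singleton.mpr (pow_dvd_pow q h))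

theorem one_sub_pow_smodEq_one {q : A} {m n : ℕ} (h : m ≤ n) :
    1 - q ^ n ≡ 1 [SMOD Ideal.span {q ^ m}] := by
  simpa using (SModEq.refl (1 : A)).sub (pow_smodEq_zero h)

theorem prod_range_one_sub_pow_smodEq {q : A} {f : ℕ → ℕ} {m K K' : ℕ} (hK : K ≤ K')
    (hf : ∀ i, K ≤ i → m ≤ f i) :
    ∏ i ∈ range K', (1 - q ^ f i) ≡ ∏ i ∈ range K, (1 - q ^ f i)
      [SMOD Ideal.span {q ^ m}] := by
  rw [← prod_range_mul_prod_Ico _ hK]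
  simpa using SModEq.rfl.mul
    (SModEq.prod fun i hi => one_sub_pow_smodEq_one (hf i (mem_Ico.mp hi).1))

theorem Polynomial.coeff_eq_of_smodEq {f g : A[X]} {n d : ℕ}
    (h : f ≡ g [SMOD Ideal.span {X ^ n}]) (hd : d < n) : f.coeff d = g.coeff d := by
  rw [SModEq.sub_mem, Ideal.mem_span_singleton, X_pow_dvd_iff] at h
  simpa [sub_eq_zero] using h d hd

end Congruence

section GaussBinom

variable {A : Type*} [CommRing A]

def gaussBinom (q : A) : ℕ → ℕ → A
  | _, 0 => 1
  | 0, _ + 1 => 0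
  | n + 1, k + 1 => gaussBinom q n (k + 1) + q ^ (n - k) * gaussBinom q n k

variable (q : A)

@[simp] theorem gaussBinom_zero_right (n : ℕ) : gaussBinom q n 0 = 1 := by
  cases n <;> rfl

@[simp] theorem gaussBinom_zero_succ (k : ℕ) : gaussBinom q 0 (k + 1) = 0 := rfl

theorem gaussBinom_succ_succ (n k : ℕ) :
    gaussBinom q (n + 1) (k + 1) = gaussBinom q n (k + 1) + q ^ (n - k) * gaussBinom q n k :=
  rfl

theorem gaussBinom_eq_zero_of_lt {n k : ℕ} (h : n < k) : gaussBinom q n k = 0 := by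
  induction n generalizing k with
  | zero => obtain ⟨k, rfl⟩ := Nat.exists_eq_add_one.mpr h; rfl
  | succ n ih =>
    obtain ⟨k, rfl⟩ := Nat.exists_eq_add_one.mpr (Nat.zero_lt_of_lt h)
    rw [gaussBinom_succ_succ, ih (by omega), ih (by omega), mul_zero, add_zero]

theorem gaussBinom_mul_prod_range (n k : ℕ) :
    gaussBinom q n k * ∏ i ∈ range k, (1 - q ^ (i + 1)) =
      ∏ i ∈ range k, (1 - q ^ (n - i)) := by
  induction n generalizing k with
  | zero =>
    cases k with
    | zero => simp
    | succ k => simp [prod_range_succ']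
  | succ n ih =>
    cases k with
    | zero => simp
    | succ k =>
      rcases Nat.lt_or_ge n k with hnk | hkn
      · rw [gaussBinom_eq_zero_of_lt q (by omega), zero_mul, eq_comm]
        exact prod_eq_zero (i := n + 1) (by simpa using hnk) (by simp)
      · have hsplit : q ^ (n + 1) = q ^ (n - k) * q ^ (k + 1) := by
          rw [← pow_add]; congr 1; omega
        have h₁ := ih (k + 1)
        rw [prod_range_succ, prod_range_succ (fun i => 1 - q ^ (n - i))] at h₁
        rw [gaussBinom_succ_succ, prod_range_succ, prod_range_succ']
        simp only [Nat.add_sub_add_right, Nat.sub_zero, hsplit]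
        linear_combination h₁ + q ^ (n - k) * (1 - q ^ (k + 1)) * ih k

/-- Cauchy's `q`-binomial theorem. -/
theorem prod_range_add_mul_pow_eq_sum (w x : A) (N : ℕ) :
    ∏ i ∈ range N, (w + x * q ^ i) =
      ∑ j ∈ range (N + 1), gaussBinom q N j * q ^ j.choose 2 * x ^ j * w ^ (N - j) := by
  induction N with
  | zero => simp
  | succ N ih =>
    have hw : ∑ j ∈ range (N + 1), gaussBinom q N j * q ^ j.choose 2 * x ^ j * w ^ (N - j) * w =
        ∑ j ∈ range (N + 1), gaussBinom q N (j + 1) * q ^ (j + 1).choose 2 * x ^ (j + 1) *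
          w ^ (N - j) + w ^ (N + 1) := by
      rw [sum_range_succ', sum_range_succ _ N, gaussBinom_eq_zero_of_lt q (Nat.lt_succ_self N)]
      simp only [zero_mul, add_zero, gaussBinom_zero_right, Nat.choose_zero_succ, pow_zero,
        one_mul, Nat.sub_zero, ← pow_succ]
      congr 1
      refine sum_congr rfl fun j hj => ?_
      rw [show N - j = N - (j + 1) + 1 by have := mem_range.mp hj; omega]
      ring
    have hx : ∑ j ∈ range (N + 1), gaussBinom q N j * q ^ j.choose 2 * x ^ j * w ^ (N - j) *
        (x * q ^ N) = ∑ j ∈ range (N + 1), q ^ (N - j) * gaussBinom q N j *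
          q ^ (j + 1).choose 2 * x ^ (j + 1) * w ^ (N - j) := by
      refine sum_congr rfl fun j hj => ?_
      have hN : q ^ N = q ^ (N - j) * q ^ j := by
        rw [← pow_add, Nat.sub_add_cancel (mem_range_succ_iff.mp hj)]
      rw [Nat.choose_succ_succ', Nat.choose_one_right, pow_add, hN]
      ring
    rw [prod_range_succ, ih, mul_add, sum_mul, sum_mul, hw, hx, sum_range_succ' _ (N + 1)]
    simp only [gaussBinom_succ_succ, add_mul, sum_add_distrib, gaussBinom_zero_right,
      Nat.choose_zero_succ, pow_zero, Nat.sub_zero, Nat.add_sub_add_right, one_mul, mul_one]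
    ring

theorem gaussBinom_mul_prod_range_smodEq {n k m r : ℕ} (hk : k ≤ n) (hmn : m ≤ n - k)
    (hmk : m ≤ k) (hmr : m ≤ r) :
    gaussBinom q n k * ∏ i ∈ range r, (1 - q ^ (i + 1)) ≡ 1
      [SMOD Ideal.span {q ^ (m + 1)}] := by
  have htrunc : ∀ {r}, m ≤ r →
      ∏ i ∈ range r, (1 - q ^ (i + 1)) ≡ ∏ i ∈ range m, (1 - q ^ (i + 1))
        [SMOD Ideal.span {q ^ (m + 1)}] := fun hr =>
    prod_range_one_sub_pow_smodEq hr fun i hi => by omega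
  calc gaussBinom q n k * ∏ i ∈ range r, (1 - q ^ (i + 1))
      ≡ gaussBinom q n k * ∏ i ∈ range k, (1 - q ^ (i + 1)) [SMOD Ideal.span {q ^ (m + 1)}] :=
        SModEq.rfl.mul ((htrunc hmr).trans (htrunc hmk).symm)
    _ = ∏ i ∈ range k, (1 - q ^ (n - i)) := gaussBinom_mul_prod_range q n k
    _ ≡ ∏ i ∈ range k, 1 [SMOD Ideal.span {q ^ (m + 1)}] :=
        SModEq.prod fun i hi => one_sub_pow_smodEq_one (by simp at hi; omega)
    _ = 1 := prod_const_one

end GaussBinom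

theorem prod_range_two_mul {M : Type*} [CommMonoid M] (f : ℕ → M) (n : ℕ) :
    ∏ i ∈ range (2 * n), f i =
      (∏ i ∈ range n, f (2 * i)) * ∏ i ∈ range n, f (2 * i + 1) := by
  induction n with
  | zero => simp
  | succ n ih =>
    rw [Nat.mul_succ, prod_range_succ, prod_range_succ, ih, prod_range_succ, prod_range_succ]
    ac_rfl

/-- The degree of the `j`-th term of `prod_range_add_mul_pow_eq_sum` at `q = X^4`, `x = X^3`,
`w = X^(4M)`, `N = 2M`. -/
def cauchyDegree (M j : ℕ) : ℕ := 4 * j.choose 2 + 3 * j + 4 * M * (2 * M - j)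

theorem natCast_cauchyDegree {M j : ℕ} (hj : j ≤ 2 * M) :
    (cauchyDegree M j : ℤ) =
      ((M * (6 * M + 1) : ℕ) : ℤ) + (2 * ((j : ℤ) - M) ^ 2 + (j - M)) := by
  qify [cauchyDegree, hj]
  rw [Nat.cast_choose_two]
  ring

theorem cauchyDegree_eq_iff {M j t : ℕ} (hj : j ≤ 2 * M) :
    cauchyDegree M j = t + M * (6 * M + 1) ↔ (4 * ((j : ℤ) - M) + 1) ^ 2 = 8 * t + 1 := by
  rw [← Nat.cast_inj (R := ℤ), natCast_cauchyDegree hj]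
  push_cast
  constructor <;> intro h <;> linarith

theorem add_sub_cauchyDegree_lt {M j t : ℕ} (hj : j ≤ 2 * M) (ht : t ≤ M) :
    t + M * (6 * M + 1) - cauchyDegree M j < 4 * (min j (2 * M - j) + 1) := by
  -- with `k = j - M`, this comes down to `2k^2 + k - 4|k| + 4 ≥ 2k^2 - 5|k| + 4 > 0`
  have key : (t : ℤ) < 2 * ((j : ℤ) - M) ^ 2 + (j - M) + 4 * (min j (2 * M - j) + 1 : ℕ) := by
    rcases le_total j M with h | h
    · rw [min_eq_left (by omega)]
      push_cast
      nlinarith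
    · rw [min_eq_right (by omega)]
      push_cast [Nat.cast_sub hj]
      nlinarith
  have he := natCast_cauchyDegree hj
  generalize 2 * ((j : ℤ) - M) ^ 2 + (j - M) = s at he key
  omega

theorem exists_four_mul_add_one_sq_eq {d : ℕ} (hd : Odd d) :
    ∃ k : ℤ, (4 * k + 1) ^ 2 = d ^ 2 := by
  obtain ⟨l, rfl⟩ := hd
  rcases Nat.even_or_odd l with ⟨k, rfl⟩ | ⟨k, rfl⟩
  · exact ⟨k, by push_cast; ring⟩
  · exact ⟨-k - 1, by push_cast; ring⟩

theorem abs_le_of_four_mul_add_one_sq_le {k : ℤ} {M : ℕ} (h : (4 * k + 1) ^ 2 ≤ 8 * M + 1) :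
    |k| ≤ M :=
  abs_le.mpr ⟨by nlinarith, by nlinarith⟩

theorem sum_boole_eq_ite_exists {ι R : Type*} [AddCommMonoidWithOne R] {s : Finset ι}
    {p : ι → Prop} [DecidablePred p] (h : ∀ i ∈ s, ∀ j ∈ s, p i → p j → i = j) :
    ∑ i ∈ s, (if p i then (1 : R) else 0) = if ∃ i ∈ s, p i then 1 else 0 := by
  split_ifs with hex
  · obtain ⟨i, hi, hpi⟩ := hex
    rw [sum_eq_single_of_mem i hi fun j hj hne => if_neg fun hpj => hne (h j hj i hi hpj hpi),
      if_pos hpi]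
  · exact sum_eq_zero fun i hi => if_neg fun hpi => hex ⟨i, hi, hpi⟩

section Jacobi

variable {R : Type*} [CommRing R]

theorem prod_range_X_pow_four_mul_add_three (M : ℕ) :
    ∏ i ∈ range M, (X : R[X]) ^ (4 * i + 3) = X ^ (M * (2 * M + 1)) := by
  induction M with
  | zero => simp
  | succ M ih =>
    rw [prod_range_succ, ih, ← pow_add]
    congr 1
    ring

theorem X_pow_mul_prod_range_one_add_X_pow_odd (M : ℕ) :
    (X : R[X]) ^ (M * (6 * M + 1)) * ∏ i ∈ range (2 * M), (1 + X ^ (2 * i + 1)) =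
      ∏ i ∈ range (2 * M), (X ^ (4 * M) + X ^ 3 * (X ^ 4) ^ i) := by
  have hlow : ∏ i ∈ range M, ((X : R[X]) ^ (4 * M) + X ^ 3 * (X ^ 4) ^ i) =
      X ^ (M * (2 * M + 1)) * ∏ i ∈ range M, (1 + X ^ (4 * i + 1)) := by
    rw [← prod_range_X_pow_four_mul_add_three,
      ← prod_range_reflect (fun i => 1 + (X : R[X]) ^ (4 * i + 1)), ← prod_mul_distrib]
    refine prod_congr rfl fun i hi => ?_
    have hi : 4 * M = 4 * i + 3 + (4 * (M - 1 - i) + 1) := by simp at hi; omega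
    rw [hi, pow_add, ← pow_mul]
    ring
  have hhigh : ∏ i ∈ range M, ((X : R[X]) ^ (4 * M) + X ^ 3 * (X ^ 4) ^ (M + i)) =
      (X ^ (4 * M)) ^ M * ∏ i ∈ range M, (1 + X ^ (4 * i + 3)) := by
    rw [show (X ^ (4 * M) : R[X]) ^ M = ∏ _i ∈ range M, X ^ (4 * M) by simp,
      ← prod_mul_distrib]
    refine prod_congr rfl fun i _ => ?_
    ring
  rw [prod_range_two_mul (fun i => 1 + X ^ (2 * i + 1)), two_mul M, prod_range_add, hlow, hhigh]
  have hodd : ∀ i, 2 * (2 * i) + 1 = 4 * i + 1 ∧ 2 * (2 * i + 1) + 1 = 4 * i + 3 := by omega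
  simp only [hodd, ← pow_mul]
  rw [show M * (6 * M + 1) = M * (2 * M + 1) + 4 * M * M by ring, pow_add]
  ring

theorem coeff_prod_mul_gaussBinom_mul_X_pow_cauchyDegree {M j t : ℕ} (hj : j ≤ 2 * M)
    (ht : t ≤ M) :
    ((∏ i ∈ range M, (1 - (X ^ 4 : R[X]) ^ (i + 1))) * gaussBinom (X ^ 4) (2 * M) j *
      X ^ cauchyDegree M j).coeff (t + M * (6 * M + 1)) =
      if cauchyDegree M j = t + M * (6 * M + 1) then 1 else 0 := by
  have hcong := gaussBinom_mul_prod_range_smodEq (X ^ 4 : R[X]) (n := 2 * M) (k := j)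
    (m := min j (2 * M - j)) (r := M) hj (by omega) (by omega) (by omega)
  rw [← pow_mul] at hcong
  rw [coeff_mul_X_pow']
  by_cases hle : cauchyDegree M j ≤ t + M * (6 * M + 1)
  · rw [if_pos hle, mul_comm, coeff_eq_of_smodEq hcong (add_sub_cauchyDegree_lt hj ht),
      coeff_one]
    exact if_congr (by omega) rfl rfl
  · rw [if_neg hle, if_neg (by omega)]

theorem exists_cauchyDegree_eq_iff {M t : ℕ} (ht : t ≤ M) :
    (∃ j ∈ range (2 * M + 1), cauchyDegree M j = t + M * (6 * M + 1)) ↔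
      ∃ d : ℕ, Odd d ∧ 8 * t + 1 = d ^ 2 := by
  constructor
  · rintro ⟨j, hj, h⟩
    rw [cauchyDegree_eq_iff (mem_range_succ_iff.mp hj)] at h
    refine ⟨(4 * ((j : ℤ) - M) + 1).natAbs,
      Int.natAbs_odd.mpr ⟨2 * ((j : ℤ) - M), by ring⟩, ?_⟩
    exact_mod_cast h.symm.trans (Int.natAbs_pow_two _).symm
  · rintro ⟨d, hd, hsq⟩
    obtain ⟨k, hk⟩ := exists_four_mul_add_one_sq_eq hd
    have hk' : (4 * k + 1) ^ 2 = 8 * (t : ℤ) + 1 := by rw [hk]; exact_mod_cast hsq.symm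
    have hkM := abs_le.mp (abs_le_of_four_mul_add_one_sq_le (M := M) (by rw [hk']; omega))
    refine ⟨(k + M).toNat, by simp; omega, (cauchyDegree_eq_iff (by omega)).mpr ?_⟩
    rw [Int.toNat_of_nonneg (by omega), add_sub_cancel_right, hk']

/-- A truncation of Jacobi's triple product identity in the form
`∏_{n ≥ 1} (1 - q^(4n)) (1 + q^(2n-1)) = ∑_{n ≥ 0} q^(n(n+1)/2)`. -/
theorem coeff_prod_one_sub_X_pow_mul_prod_one_add_X_pow_odd {M t : ℕ} (ht : t ≤ M) :
    ((∏ i ∈ range M, (1 - (X ^ 4 : R[X]) ^ (i + 1))) *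
      ∏ i ∈ range (2 * M), (1 + X ^ (2 * i + 1))).coeff t =
      if ∃ d : ℕ, Odd d ∧ 8 * t + 1 = d ^ 2 then 1 else 0 := by
  have hterm : ∀ j ∈ range (2 * M + 1),
      ((∏ i ∈ range M, (1 - (X ^ 4 : R[X]) ^ (i + 1))) * (gaussBinom (X ^ 4) (2 * M) j *
        (X ^ 4) ^ j.choose 2 * (X ^ 3) ^ j * (X ^ (4 * M)) ^ (2 * M - j))).coeff
          (t + M * (6 * M + 1)) =
        if cauchyDegree M j = t + M * (6 * M + 1) then 1 else 0 := by
    intro j hj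
    rw [← coeff_prod_mul_gaussBinom_mul_X_pow_cauchyDegree (mem_range_succ_iff.mp hj) ht,
      cauchyDegree]
    congr 1
    simp only [← pow_mul, pow_add]
    ring
  rw [← coeff_X_pow_mul _ (M * (6 * M + 1)) t, mul_left_comm,
    X_pow_mul_prod_range_one_add_X_pow_odd, prod_range_add_mul_pow_eq_sum, mul_sum,
    finsetSum_coeff, sum_congr rfl hterm, sum_boole_eq_ite_exists]
  · exact if_congr (exists_cauchyDegree_eq_iff ht) rfl rfl
  · intro j hj j' hj' h h'
    rw [mem_range_succ_iff] at hj hj'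
    rw [cauchyDegree_eq_iff hj, ← (cauchyDegree_eq_iff hj').mp h',
      sq_eq_sq_iff_eq_or_eq_neg] at h
    omega

end Jacobi

theorem prod_range_one_sub_pow_pow_expChar_pow {A : Type*} [CommRing A] {p : ℕ}
    [ExpChar A p] (q : A) (N n : ℕ) :
    (∏ i ∈ range N, (1 - q ^ (i + 1))) ^ p ^ n =
      ∏ i ∈ range N, (1 - (q ^ p ^ n) ^ (i + 1)) := by
  rw [← prod_pow]
  refine prod_congr rfl fun i _ => ?_
  rw [sub_pow_expChar_pow, one_pow, ← pow_mul, ← pow_mul, mul_comm]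

section CharTwo

variable {R : Type*} [CommRing R] [CharP R 2]

theorem prod_range_one_sub_X_pow_cube_smodEq (N : ℕ) :
    (∏ i ∈ range N, (1 - (X : R[X]) ^ (i + 1))) ^ 3 ≡
      (∏ i ∈ range N, (1 - (X ^ 4 : R[X]) ^ (i + 1))) *
        ∏ i ∈ range (2 * N), (1 + X ^ (2 * i + 1)) [SMOD Ideal.span {X ^ (N + 1)}] := by
  have htrunc : ∀ {f : ℕ → ℕ}, (∀ i, i < f i) →
      ∏ i ∈ range N, (1 - (X : R[X]) ^ f i) ≡ ∏ i ∈ range (2 * N), (1 - X ^ f i)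
        [SMOD Ideal.span {X ^ (N + 1)}] := fun hf =>
    (prod_range_one_sub_pow_smodEq (by omega) fun i hi => (hf i).trans_le' (by omega)).symm
  have hsplit : ∏ i ∈ range (2 * N), (1 - (X : R[X]) ^ (i + 1)) =
      (∏ i ∈ range N, (1 - (X ^ 2) ^ (i + 1))) * ∏ i ∈ range N, (1 - X ^ (2 * i + 1)) := by
    rw [prod_range_two_mul, mul_comm]
    simp only [← pow_mul, mul_add, mul_one]
  have hfrob := prod_range_one_sub_pow_pow_expChar_pow (p := 2) (X : R[X]) N 1
  have hfrob' := prod_range_one_sub_pow_pow_expChar_pow (p := 2) (X ^ 2 : R[X]) N 1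
  rw [pow_one] at hfrob hfrob'
  rw [show ((X : R[X]) ^ 2) ^ 2 = X ^ 4 by ring] at hfrob'
  calc (∏ i ∈ range N, (1 - (X : R[X]) ^ (i + 1))) ^ 3
      = (∏ i ∈ range N, (1 - X ^ (i + 1))) ^ 2 * ∏ i ∈ range N, (1 - X ^ (i + 1)) := by ring
    _ ≡ (∏ i ∈ range N, (1 - X ^ (i + 1))) ^ 2 * ∏ i ∈ range (2 * N), (1 - X ^ (i + 1))
        [SMOD Ideal.span {X ^ (N + 1)}] :=
        SModEq.rfl.mul (htrunc (f := fun i => i + 1) fun i => by omega)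
    _ = (∏ i ∈ range N, (1 - (X ^ 4) ^ (i + 1))) *
          ∏ i ∈ range N, (1 - X ^ (2 * i + 1)) := by
      rw [hsplit, hfrob, ← hfrob']
      ring
    _ ≡ (∏ i ∈ range N, (1 - (X ^ 4) ^ (i + 1))) *
          ∏ i ∈ range (2 * N), (1 - X ^ (2 * i + 1))
        [SMOD Ideal.span {X ^ (N + 1)}] :=
        SModEq.rfl.mul (htrunc (f := fun i => 2 * i + 1) fun i => by omega)
    _ = _ := by simp only [CharTwo.sub_eq_add]

theorem coeff_prod_range_one_sub_X_pow_cube {N t : ℕ} (ht : t ≤ N) :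
    ((∏ i ∈ range N, (1 - (X : R[X]) ^ (i + 1))) ^ 3).coeff t =
      if ∃ d : ℕ, Odd d ∧ 8 * t + 1 = d ^ 2 then 1 else 0 :=
  (coeff_eq_of_smodEq (prod_range_one_sub_X_pow_cube_smodEq N) (by omega)).trans
    (coeff_prod_one_sub_X_pow_mul_prod_one_add_X_pow_odd ht)

theorem prod_Icc_one_eq_prod_range {M : Type*} [CommMonoid M] (f : ℕ → M) (n : ℕ) :
    ∏ i ∈ Icc 1 n, f i = ∏ i ∈ range n, f (i + 1) := by
  induction n with
  | zero => simp
  | succ n ih => rw [prod_Icc_succ_top (by omega), ih, prod_range_succ]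

theorem coeff_X_mul_prod_Icc_one_sub_X_pow_pow_24 (m : ℕ) :
    (X * ∏ n ∈ Icc 1 m, (1 - (X : R[X]) ^ n) ^ 24).coeff m =
      if ∃ d : ℕ, Odd d ∧ m = d ^ 2 then 1 else 0 := by
  cases m with
  | zero =>
    rw [coeff_X_mul_zero, if_neg]
    rintro ⟨d, hd, h⟩
    simp_all [eq_comm (a := 0)]
  | succ t =>
    have hfrob := prod_range_one_sub_pow_pow_expChar_pow (p := 2) (X : R[X]) (t + 1) 3
    have hexpand : ∏ i ∈ range (t + 1), (1 - ((X : R[X]) ^ 2 ^ 3) ^ (i + 1)) =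
        expand R 8 (∏ i ∈ range (t + 1), (1 - X ^ (i + 1))) := by
      simp [map_prod]
    rw [coeff_X_mul, prod_pow, prod_Icc_one_eq_prod_range, show 24 = 2 ^ 3 * 3 by rfl, pow_mul,
      hfrob, hexpand, ← map_pow, coeff_expand (by norm_num)]
    by_cases h8 : 8 ∣ t
    · rw [if_pos h8, coeff_prod_range_one_sub_X_pow_cube (by omega), Nat.mul_div_cancel' h8]
    · rw [if_neg h8, if_neg]
      rintro ⟨d, hd, hsq⟩
      exact h8 (by simpa [← hsq] using Nat.eight_dvd_sq_sub_one_of_odd hd)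

end CharTwo

theorem intCast_coeff_Delta (m : ℕ) :
    ((PowerSeries.coeff m Delta : ℤ) : ZMod 2) =
      if ∃ d : ℕ, Odd d ∧ m = d ^ 2 then 1 else 0 := by
  rw [Delta, PowerSeries.coeff_mk, ← eq_intCast (Int.castRingHom (ZMod 2)), ← coeff_map]
  simpa [Polynomial.map_prod] using coeff_X_mul_prod_Icc_one_sub_X_pow_pow_24 m

/-- The mod-2 reduction of `Δ` is `Σ_{n ≥ 1} q^{(2n-1)²}`; equivalently, the constant
coefficient of `Δ` is `0`, and for `m ≥ 1` the coefficient of `q^m` in `Δ` is odd iff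
`m` is the square of an odd natural number. -/
theorem Delta_mod_two :
    PowerSeries.map (Int.castRingHom (ZMod 2)) Delta =
      PowerSeries.mk (fun m => if ∃ d : ℕ, Odd d ∧ m = d ^ 2 then (1 : ZMod 2) else 0) ∧
    PowerSeries.coeff 0 Delta = 0 ∧
    ∀ m : ℕ, 1 ≤ m →
      (Odd (PowerSeries.coeff m Delta) ↔ ∃ d : ℕ, Odd d ∧ m = d ^ 2) := by
  refine ⟨?_, ?_, fun m _ => ?_⟩
  · ext m
    rw [PowerSeries.coeff_map, PowerSeries.coeff_mk, eq_intCast, intCast_coeff_Delta]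
  · rw [Delta, PowerSeries.coeff_mk, mul_coeff_zero, coeff_X_zero, zero_mul]
  · rw [← ZMod.intCast_eq_one_iff_odd, intCast_coeff_Delta]
    split_ifs with h <;> simp [h]
end

section
/- Let V be a finite-dimensional complex vector space carrying: a ℂ-linear map P with P(P(v)) = v for all v; a conjugate-linear map T with T(T(v)) = v, and T(P(v)) = −P(T(v)) for all v; and a ℂ-linear map Q with Q(P(v)) = −P(Q(v)), T(Q(v)) = −Q(T(v)), and Q(Q(v)) = E·v for all v, where E is a real number with E > 0. Then the complex dimension of V is divisible by 4. (This expresses the paper's claim that the irreducible representation of the algebra T² = 1, T(−1)^F = −(−1)^F T, Q(−1)^F = −(−1)^F Q, TQ = −QT with Q² = E > 0 is four-dimensional, so every such representation has dimension a multiple of four: the composite TQ preserves the (−1)^F = +1 eigenspace, is conjugate-linear there, and squares to −E, forcing that eigenspace to be even-dimensional by Kramers degeneracy.) -/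
open Module

lemma kramers_aux {W : Type*} [AddCommGroup W] [Module ℂ W]
    (n : ℕ) (b : Basis (Fin n) ℂ W) (hn : finrank ℂ W = n)
    (J : W →ₛₗ[starRingEnd ℂ] W) (E : ℝ) (hE : 0 < E)
    (hJ : ∀ w, J (J w) = -((E : ℂ) • w)) : Even n := by
  let Ke : W ≃ₛₗ[starRingEnd ℂ] W :=
    (b.equivFun.trans (starLinearEquiv ℂ)).trans b.equivFun.symm
  let K : W →ₛₗ[starRingEnd ℂ] W := Ke.toLinearMap
  have hKapply : ∀ x, K x = b.equivFun.symm (star (b.equivFun x)) := fun x => rfl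
  have hKrepr : ∀ (x : W) (i : Fin n), b.equivFun (K x) i = starRingEnd ℂ (b.equivFun x i) := by
    intro x i
    rw [hKapply, b.equivFun.apply_symm_apply]
    rfl
  have hKK : ∀ x, K (K x) = x := by
    intro x
    apply b.equivFun.injective
    funext i
    rw [hKrepr, hKrepr]
    simp
  let A : W →ₗ[ℂ] W := J.comp K
  have hJA : ∀ w, J w = A (K w) := by
    intro w
    show J w = J (K (K w))
    rw [hKK]
  let A' : W →ₗ[ℂ] W := K.comp (A.comp K)
  have claim1 : (J.comp J : W →ₗ[ℂ] W) = A.comp A' := by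
    ext w
    simp only [LinearMap.comp_apply]
    rw [hJA (J w), hJA w]
    rfl
  have claim2 : LinearMap.det A' = starRingEnd ℂ (LinearMap.det A) := by
    rw [← LinearMap.det_toMatrix b, ← LinearMap.det_toMatrix b]
    have hmat : LinearMap.toMatrix b b A' = (LinearMap.toMatrix b b A).map (starRingEnd ℂ) := by
      ext i j
      rw [Matrix.map_apply, LinearMap.toMatrix_apply, LinearMap.toMatrix_apply]
      have hKb : K (b j) = b j := by
        apply b.equivFun.injective
        funext i
        rw [hKrepr]
        simp [b.equivFun_apply, Finsupp.single_apply, apply_ite]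
      show b.repr (K (A (K (b j)))) i = starRingEnd ℂ (b.repr (A (b j)) i)
      rw [hKb]
      have := hKrepr (A (b j)) i
      simpa [b.equivFun_apply] using this
    rw [hmat]
    exact ((starRingEnd ℂ).map_det _).symm
  have claim3 : LinearMap.det (J.comp J : W →ₗ[ℂ] W) = (-(E:ℂ))^n := by
    have hid : (J.comp J : W →ₗ[ℂ] W) = (-(E:ℂ)) • (LinearMap.id : W →ₗ[ℂ] W) := by
      ext w
      simp [hJ w, neg_smul]
    rw [hid, LinearMap.det_smul, LinearMap.det_id, mul_one, hn]
  have key : (-(E:ℂ))^n = (Complex.normSq (LinearMap.det A) : ℂ) := by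
    rw [← claim3, claim1, LinearMap.det_comp, claim2, Complex.mul_conj]
  have keyR : ((-E)^n : ℝ) = Complex.normSq (LinearMap.det A) := by
    exact_mod_cast key
  rcases Nat.even_or_odd n with h | h
  · exact h
  · exfalso
    have h1 : ((-E)^n : ℝ) < 0 := by
      rw [h.neg_pow]
      simpa using pow_pos hE n
    have h2 : (0:ℝ) ≤ Complex.normSq (LinearMap.det A) := Complex.normSq_nonneg _
    linarith [keyR ▸ h2]

lemma kramers_even {W : Type*} [AddCommGroup W] [Module ℂ W] [FiniteDimensional ℂ W]
    (J : W →ₛₗ[starRingEnd ℂ] W) (E : ℝ) (hE : 0 < E)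
    (hJ : ∀ w, J (J w) = -((E : ℂ) • w)) : Even (finrank ℂ W) :=
  kramers_aux (finrank ℂ W) (finBasis ℂ W) rfl J E hE hJ


/-- A finite-dimensional complex representation of the algebra `T² = 1`,
`T(−1)^F = −(−1)^F T`, `Q(−1)^F = −(−1)^F Q`, `TQ = −QT`, `Q² = E > 0`
has complex dimension divisible by 4. -/
theorem dim_divisible_by_four {V : Type*} [AddCommGroup V] [Module ℂ V]
    [FiniteDimensional ℂ V]
    (P : V →ₗ[ℂ] V) (T : V →ₛₗ[starRingEnd ℂ] V) (Q : V →ₗ[ℂ] V) (E : ℝ) (hE : 0 < E)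
    (hP : ∀ v : V, P (P v) = v)
    (hT : ∀ v : V, T (T v) = v)
    (hTP : ∀ v : V, T (P v) = - P (T v))
    (hQP : ∀ v : V, Q (P v) = - P (Q v))
    (hTQ : ∀ v : V, T (Q v) = - Q (T v))
    (hQ : ∀ v : V, Q (Q v) = (E : ℂ) • v) :
    4 ∣ Module.finrank ℂ V := by
  classical
  set Vp : Submodule ℂ V := LinearMap.ker (P - LinearMap.id) with hVp
  set Vm : Submodule ℂ V := LinearMap.ker (P + LinearMap.id) with hVm
  have memp : ∀ v : V, v ∈ Vp ↔ P v = v := by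
    intro v
    simp [hVp, LinearMap.mem_ker, sub_eq_zero]
  have memm : ∀ v : V, v ∈ Vm ↔ P v = -v := by
    intro v
    simp [hVm, LinearMap.mem_ker, add_eq_zero_iff_eq_neg]
  have hPT : ∀ v : V, P (T v) = - T (P v) := fun v => by
    rw [← neg_neg (P (T v)), ← hTP v]
  have hPQ : ∀ v : V, P (Q v) = - Q (P v) := fun v => by
    rw [hQP v, neg_neg]
  have hQT : ∀ v : V, Q (T v) = - T (Q v) := fun v => by
    rw [hTQ v, neg_neg]
  have hsup : Vp ⊔ Vm = ⊤ := by
    rw [eq_top_iff]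
    intro v _
    have hv : v = (2:ℂ)⁻¹ • (v + P v) + (2:ℂ)⁻¹ • (v - P v) := by
      rw [← smul_add]
      have h2 : v + P v + (v - P v) = (2:ℂ) • v := by
        rw [two_smul]; abel
      rw [h2, smul_smul]
      norm_num
    rw [hv]
    apply Submodule.add_mem_sup
    · rw [memp, map_smul, map_add, hP]
      congr 1
      abel
    · rw [memm, map_smul, map_sub, hP, ← smul_neg]
      congr 1
      abel
  have hinf : Vp ⊓ Vm = ⊥ := by
    rw [eq_bot_iff]
    intro v hv
    obtain ⟨h1, h2⟩ := Submodule.mem_inf.mp hv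
    rw [memp] at h1
    rw [memm] at h2
    have h2v : (2:ℂ) • v = 0 := by
      rw [two_smul]
      nth_rewrite 1 [← h1]
      rw [h2]; abel
    have hv0 : v = 0 := by
      have := congrArg (fun w => (2:ℂ)⁻¹ • w) h2v
      simpa [smul_smul] using this
    simp [hv0]
  have hdim : finrank ℂ V = finrank ℂ Vp + finrank ℂ Vm := by
    have h := Submodule.finrank_sup_add_finrank_inf_eq Vp Vm
    rw [hsup, hinf] at h
    simpa [finrank_top] using h
  have hTpm : ∀ v ∈ Vp, T v ∈ Vm := by
    intro v hv
    rw [memp] at hv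
    rw [memm, hPT, hv]
  have hTmp : ∀ v ∈ Vm, T v ∈ Vp := by
    intro v hv
    rw [memm] at hv
    rw [memp, hPT, hv, map_neg, neg_neg]
  -- real-linear equivalence between Vp and Vm given by T
  let f : Vp →ₗ[ℝ] Vm :=
  { toFun := fun x => ⟨T x, hTpm x x.2⟩
    map_add' := by intro x y; ext; simp
    map_smul' := by
      intro r x
      ext
      show T ((r:ℂ) • (x:V)) = (r:ℂ) • T (x:V)
      rw [T.map_smulₛₗ, Complex.conj_ofReal] }
  let g : Vm →ₗ[ℝ] Vp :=
  { toFun := fun x => ⟨T x, hTmp x x.2⟩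
    map_add' := by intro x y; ext; simp
    map_smul' := by
      intro r x
      ext
      show T ((r:ℂ) • (x:V)) = (r:ℂ) • T (x:V)
      rw [T.map_smulₛₗ, Complex.conj_ofReal] }
  let e : Vp ≃ₗ[ℝ] Vm := LinearEquiv.ofLinear f g
    (by ext x; exact hT x) (by ext x; exact hT x)
  have hpm : finrank ℂ Vp = finrank ℂ Vm := by
    have hr := e.finrank_eq
    rw [finrank_real_of_complex, finrank_real_of_complex] at hr
    omega
  -- the conjugate-linear map J = T ∘ Q on Vp
  have hSmem : ∀ v ∈ Vp, T (Q v) ∈ Vp := by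
    intro v hv
    rw [memp] at hv
    rw [memp, hPT, hPQ, hv, map_neg, neg_neg]
  let J : Vp →ₛₗ[starRingEnd ℂ] Vp :=
  { toFun := fun x => ⟨T (Q x), hSmem x x.2⟩
    map_add' := by intro x y; ext; simp
    map_smul' := by
      intro c x
      ext
      show T (Q (c • (x:V))) = starRingEnd ℂ c • T (Q (x:V))
      rw [Q.map_smul, T.map_smulₛₗ] }
  have hJ : ∀ x : Vp, J (J x) = -((E:ℂ) • x) := by
    intro x
    ext
    show T (Q (T (Q (x:V)))) = -((E:ℂ) • (x:V))
    rw [hQT (Q (x:V)), map_neg, hQ, T.map_smulₛₗ, Complex.conj_ofReal, T.map_smulₛₗ,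
      Complex.conj_ofReal, hT]
  have heven : Even (finrank ℂ Vp) := kramers_even J E hE hJ
  obtain ⟨k, hk⟩ := heven
  rw [hdim, ← hpm, hk]
  omega
end

section
/- Let V be a finite-dimensional complex vector space, let T : V → V be conjugate-linear with T(T(v)) = v for all v, and let Q : V → V be ℂ-linear with T(Q(v)) = −Q(T(v)) for all v and Q(Q(v)) = E·v for all v, where E is a real number with E > 0. Then the complex dimension of V is even. (This is the structure used for gravitational anomaly n ≡ 1 mod 8: under the algebra T² = 1, TQ = −QT with Q² = E > 0, nonzero-energy eigenspaces are even-dimensional, because TQ is conjugate-linear with square −E and Kramers degeneracy applies.) -/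
open Module

/-- Kramers degeneracy: a conjugate-linear map squaring to `-E < 0` forces even
complex dimension. -/
theorem aux_kramers (E : ℝ) (hE : 0 < E) :
    ∀ (n : ℕ) {V : Type*} [AddCommGroup V] [Module ℂ V] [FiniteDimensional ℂ V]
      (S : V →ₛₗ[starRingEnd ℂ] V),
      (∀ v : V, S (S v) = -((E : ℂ) • v)) → finrank ℂ V = n → Even n := by
  intro n
  induction n using Nat.strong_induction_on with
  | _ n ih =>
    intro V _ _ _ S hS hn
    rcases Nat.eq_zero_or_pos n with h0 | hpos
    · simp [h0]
    · have hV : 0 < finrank ℂ V := hn ▸ hpos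
      have : Nontrivial V := finrank_pos_iff.mp hV
      obtain ⟨v, hv0⟩ := exists_ne (0 : V)
      -- v and S v are linearly independent
      have hli : LinearIndependent ℂ ![v, S v] := by
        rw [LinearIndependent.pair_iff]
        intro s t hst
        have h2 : starRingEnd ℂ s • S v + starRingEnd ℂ t • S (S v) = 0 := by
          have := congrArg S hst
          simpa using this
        rw [hS] at h2
        have h2' : starRingEnd ℂ s • S v = (starRingEnd ℂ t * (E : ℂ)) • v := by
          rw [smul_neg, smul_smul, add_neg_eq_zero] at h2
          exact h2
        have h3 : (starRingEnd ℂ s * s) • v + (t * (starRingEnd ℂ t * (E : ℂ))) • v = 0 := by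
          have := congrArg (fun w => starRingEnd ℂ s • w) hst
          simp only [smul_add, smul_zero] at this
          rw [smul_smul, smul_smul, mul_comm (starRingEnd ℂ s) t,
            mul_smul t (starRingEnd ℂ s) (S v), h2', smul_smul] at this
          exact this
        rw [← add_smul] at h3
        have h4 : starRingEnd ℂ s * s + t * (starRingEnd ℂ t * (E : ℂ)) = 0 := by
          by_contra h
          rcases smul_eq_zero.mp h3 with h' | h'
          · exact h h'
          · exact hv0 h'
        have hs2 : (Complex.normSq s : ℂ) + (Complex.normSq t : ℂ) * (E : ℝ) = 0 := by
          rw [← h4]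
          rw [Complex.normSq_eq_conj_mul_self, Complex.normSq_eq_conj_mul_self]
          ring
        have hre : Complex.normSq s + Complex.normSq t * E = 0 := by
          exact_mod_cast hs2
        have hs0 : s = 0 := by
          have h1 := Complex.normSq_nonneg s
          have h2 := Complex.normSq_nonneg t
          have : Complex.normSq s = 0 := by nlinarith
          exact Complex.normSq_eq_zero.mp this
        have ht0 : t = 0 := by
          have h1 := Complex.normSq_nonneg s
          have h2 := Complex.normSq_nonneg t
          have : Complex.normSq t = 0 := by nlinarith
          exact Complex.normSq_eq_zero.mp this
        exact ⟨hs0, ht0⟩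
      -- the span of v, S v
      set W : Submodule ℂ V := Submodule.span ℂ (Set.range ![v, S v]) with hW
      have hvW : v ∈ Submodule.span ℂ (Set.range ![v, S v]) :=
        Submodule.subset_span ⟨0, rfl⟩
      have hSvW : S v ∈ Submodule.span ℂ (Set.range ![v, S v]) :=
        Submodule.subset_span ⟨1, rfl⟩
      have hWrank : finrank ℂ W = 2 := by
        rw [hW, finrank_span_eq_card hli]
        simp
      have hWinv : W ≤ W.comap S := by
        rw [hW, Submodule.span_le]
        rintro x ⟨i, rfl⟩
        fin_cases i
        · exact hSvW
        · show S (S v) ∈ Submodule.span ℂ (Set.range ![v, S v])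
          rw [hS]
          exact Submodule.neg_mem _ (Submodule.smul_mem _ _ hvW)
      -- induced map on quotient
      let S' : (V ⧸ W) →ₛₗ[starRingEnd ℂ] (V ⧸ W) := Submodule.mapQ W W S hWinv
      have hS' : ∀ x : V ⧸ W, S' (S' x) = -((E : ℂ) • x) := by
        intro x
        obtain ⟨x, rfl⟩ := Submodule.Quotient.mk_surjective W x
        show Submodule.mapQ W W S hWinv (Submodule.mapQ W W S hWinv (Submodule.Quotient.mk x))
          = _
        rw [Submodule.mapQ_apply, Submodule.mapQ_apply, hS]
        simp [Submodule.Quotient.mk_smul]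
      have hsum : finrank ℂ (V ⧸ W) + finrank ℂ W = finrank ℂ V :=
        Submodule.finrank_quotient_add_finrank W
      have hlt : finrank ℂ (V ⧸ W) < n := by omega
      have heven := ih _ hlt S' hS' rfl
      have : n = finrank ℂ (V ⧸ W) + 2 := by omega
      rw [this]
      exact heven.add (even_two)

/-- For the algebra `T² = 1`, `TQ = −QT`, `Q² = E > 0` (gravitational anomaly
`n ≡ 1 mod 8`), any finite-dimensional complex representation is even-dimensional. -/
theorem dim_even_of_TQ {V : Type*} [AddCommGroup V] [Module ℂ V]
    [FiniteDimensional ℂ V]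
    (T : V →ₛₗ[starRingEnd ℂ] V) (Q : V →ₗ[ℂ] V) (E : ℝ) (hE : 0 < E)
    (hT : ∀ v : V, T (T v) = v)
    (hTQ : ∀ v : V, T (Q v) = - Q (T v))
    (hQ : ∀ v : V, Q (Q v) = (E : ℂ) • v) :
    Even (Module.finrank ℂ V) := by
  let S : V →ₛₗ[starRingEnd ℂ] V :=
    { toFun := fun v => T (Q v)
      map_add' := fun x y => by simp
      map_smul' := fun c x => by simp }
  have hS : ∀ v : V, S (S v) = -((E : ℂ) • v) := by
    intro v
    show T (Q (T (Q v))) = _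
    have h1 : Q (T (Q v)) = -((E : ℂ) • T v) := by
      have h := hTQ (Q v)
      rw [hQ, map_smulₛₗ] at h
      have h' := congrArg Neg.neg h
      rw [neg_neg] at h'
      simpa [Complex.conj_ofReal] using h'.symm
    rw [h1]
    rw [map_neg, map_smulₛₗ, hT]
    simp
  exact aux_kramers E hE _ S hS rfl
end

section
/- For every m ≥ 0, every simple module M over the real Clifford algebra of the split quadratic form of signature (m, m) on ℝ^{2m} has dimension 2^m as a real vector space (via restriction of scalars along ℝ → CliffordAlgebra). In particular all simple modules over this Clifford algebra have the same ℝ-dimension 2^m. (This is the uniqueness and dimension claim for the real irreducible representation of Cliff_{m,m} used in the appendix.) -/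
/-- The split quadratic form of signature `(m, m)` on `ℝ^{2m}`:
`x₁² + ⋯ + x_m² − y₁² − ⋯ − y_m²`. -/
noncomputable def splitForm (m : ℕ) : QuadraticForm ℝ ((Fin m ⊕ Fin m) → ℝ) :=
  QuadraticMap.weightedSumSquares ℝ
    (Sum.elim (fun _ : Fin m => (1 : ℝ)) (fun _ : Fin m => (-1 : ℝ)))

/-!
Index the basis of `ℝ^{2^m}` by bit strings `S`. The Jordan–Wigner operators `c_i`, `d_i` flip
bit `i` and multiply by the sign `∏_{j<i} (-1)^{S j}`, times `(-1)^{S i}` for `d_i` (the Pauli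
tensors `Z ⊗ ⋯ ⊗ Z ⊗ X ⊗ 1 ⊗ ⋯ ⊗ 1` and `Z ⊗ ⋯ ⊗ Z ⊗ ZX ⊗ 1 ⊗ ⋯ ⊗ 1`). They pairwise
anticommute, `c_i² = 1` and `d_i² = -1`, so they define an algebra map
`Cliff_{m,m} → End(ℝ^{2^m})`. Its image contains the diagonal matrices (generated by the
commuting involutions `d_i c_i`) and links any two basis vectors by bit flips, so it is onto;
both sides have dimension `4^m` (the Clifford algebra has the dimension of the exterior algebra),
so it is an isomorphism. Finally, a simple `End_K V`-module `M` is isomorphic to `V`: some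
rank-one map `φ ⊗ v` does not kill a given `x ≠ 0`, and `v ↦ (φ ⊗ v) • x` is a nonzero
`End_K V`-linear map between simple modules, hence bijective by Schur's lemma.
-/
open Module Matrix

theorem sum_smul_mul_self_eq_algebraMap {ι R A : Type*} [Fintype ι] [CommRing R] [Ring A]
    [Algebra R A] {g : ι → A} {w : ι → R} (hsq : ∀ i, g i * g i = algebraMap R A (w i))
    (hanti : ∀ i j, i ≠ j → g i * g j + g j * g i = 0) (v : ι → R) :
    (∑ i, v i • g i) * (∑ i, v i • g i) = algebraMap R A (∑ i, w i • (v i * v i)) := by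
  classical
  induction (Finset.univ : Finset ι) using Finset.induction_on with
  | empty => simp
  | insert i s hi ih =>
    set a := ∑ j ∈ s, v j • g j
    have hcross : g i * a + a * g i = 0 := by
      rw [Finset.mul_sum, Finset.sum_mul, ← Finset.sum_add_distrib]
      refine Finset.sum_eq_zero fun j hj => ?_
      rw [mul_smul_comm, smul_mul_assoc, ← smul_add,
        hanti i j (ne_of_mem_of_not_mem hj hi).symm, smul_zero]
    rw [Finset.sum_insert hi, Finset.sum_insert hi, map_add, ← ih]
    calc (v i • g i + a) * (v i • g i + a)
        = (v i * v i) • (g i * g i) + v i • (g i * a + a * g i) + a * a := by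
          simp only [add_mul, mul_add, smul_mul_assoc, mul_smul_comm, smul_add, smul_smul]
          abel
      _ = _ := by
        rw [hcross, smul_zero, add_zero, hsq, Algebra.smul_def, ← map_mul, mul_comm (v i * v i),
          smul_eq_mul]

noncomputable def CliffordAlgebra.liftOfAnticomm {ι R A : Type*} [Fintype ι] [CommRing R]
    [Ring A] [Algebra R A] {w : ι → R} (g : ι → A) (hsq : ∀ i, g i * g i = algebraMap R A (w i))
    (hanti : ∀ i j, i ≠ j → g i * g j + g j * g i = 0) :
    CliffordAlgebra (QuadraticMap.weightedSumSquares R w) →ₐ[R] A :=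
  CliffordAlgebra.lift _ ⟨Fintype.linearCombination R g, fun v => by
    rw [Fintype.linearCombination_apply, QuadraticMap.weightedSumSquares_apply]
    exact sum_smul_mul_self_eq_algebraMap hsq hanti v⟩

theorem CliffordAlgebra.liftOfAnticomm_surjective {ι R A : Type*} [Fintype ι] [CommRing R]
    [Ring A] [Algebra R A] {w : ι → R} (g : ι → A) (hsq : ∀ i, g i * g i = algebraMap R A (w i))
    (hanti : ∀ i j, i ≠ j → g i * g j + g j * g i = 0) (hg : Algebra.adjoin R (Set.range g) = ⊤) :
    Function.Surjective (liftOfAnticomm g hsq hanti) := by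
  classical
  rw [← AlgHom.range_eq_top, eq_top_iff, ← hg]
  exact Algebra.adjoin_le <| Set.range_subset_iff.2 fun k =>
    ⟨CliffordAlgebra.ι _ (Pi.single k 1), by simp [liftOfAnticomm]⟩

theorem CliffordAlgebra.finrank_eq_two_pow {K V : Type*} [Field K] [Invertible (2 : K)]
    [AddCommGroup V] [Module K V] [FiniteDimensional K V] (Q : QuadraticForm K V) :
    finrank K (CliffordAlgebra Q) = 2 ^ finrank K V := by
  rw [(CliffordAlgebra.equivExterior Q).finrank_eq,
    finrank_eq_card_basis (Module.finBasis K V).ExteriorAlgebra, Fintype.card_finset,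
    Fintype.card_fin]

section
variable {K V M : Type*} [Field K] [AddCommGroup V] [Module K V] [AddCommGroup M]

theorem exists_smulRight_smul_ne_zero [FiniteDimensional K V] [Module (End K V) M] {x : M}
    (hx : x ≠ 0) : ∃ (φ : Dual K V) (v : V), φ.smulRight v • x ≠ 0 := by
  let b := Module.finBasis K V
  by_contra! h
  apply hx
  have hsum : ∑ i, (b.coord i).smulRight (b i) = (1 : End K V) :=
    LinearMap.ext fun v => by simp [b.sum_repr]
  rw [← one_smul (End K V) x, ← hsum, Finset.sum_smul]
  exact Finset.sum_eq_zero fun i _ => h _ _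

def Module.Dual.smulRightSmul [Module (End K V) M] (φ : Dual K V) (x : M) :
    V →ₗ[End K V] M where
  toFun v := φ.smulRight v • x
  map_add' v w := by
    rw [← add_smul]
    congr 1
    ext y
    simp
  map_smul' g v := by
    rw [RingHom.id_apply, ← mul_smul]
    congr 1
    ext y
    simp

theorem Module.End.finrank_eq_of_isSimpleModule [FiniteDimensional K V] [Module K M]
    [Module (End K V) M] [IsScalarTower K (End K V) M] [IsSimpleModule (End K V) M] :
    finrank K M = finrank K V := by
  have := IsSimpleModule.nontrivial (End K V) M
  obtain ⟨x, hx⟩ := exists_ne (0 : M)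
  obtain ⟨φ, v, hv⟩ := exists_smulRight_smul_ne_zero (K := K) (V := V) hx
  have hθ : φ.smulRightSmul x ≠ 0 := fun h => hv (LinearMap.congr_fun h v)
  have : Nontrivial V := ⟨v, 0, fun h => hv (by simp [h])⟩
  exact (LinearEquiv.ofBijective ((φ.smulRightSmul x).restrictScalars K)
    (LinearMap.bijective_of_ne_zero (R := End K V) hθ)).finrank_eq.symm

theorem AlgEquiv.finrank_eq_of_isSimpleModule [FiniteDimensional K V] [Module K M]
    {A : Type*} [Ring A] [Algebra K A]
    (e : A ≃ₐ[K] End K V) [Module A M] [IsScalarTower K A M] [IsSimpleModule A M] :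
    finrank K M = finrank K V := by
  let _ : Module (End K V) M := Module.compHom M e.symm.toRingHom
  have : IsScalarTower K (End K V) M := ⟨fun r g x => by
    show e.symm (r • g) • x = r • (e.symm g • x)
    rw [map_smul, smul_assoc]⟩
  have : RingHomSurjective e.symm.toRingHom := ⟨e.symm.surjective⟩
  let l : M →ₛₗ[e.symm.toRingHom] M :=
    { toFun := id, map_add' := fun _ _ => rfl, map_smul' := fun _ _ => rfl }
  have : IsSimpleModule (End K V) M :=
    (l.isSimpleModule_iff_of_bijective Function.bijective_id).2 ‹_›
  exact Module.End.finrank_eq_of_isSimpleModule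
end

section
variable {K X : Type*} [Field K] [Fintype X] [DecidableEq X] {A : Subalgebra K (Matrix X X K)}

theorem Matrix.single_mem_of_apply_ne_zero (hdiag : ∀ S, single S S (1 : K) ∈ A)
    {W : Matrix X X K} (hW : W ∈ A) {S T : X} (h : W T S ≠ 0) : single T S 1 ∈ A := by
  have hmem := A.smul_mem (A.mul_mem (A.mul_mem (hdiag T) hW) (hdiag S)) (W T S)⁻¹
  rwa [single_mul_mul_single, one_mul, mul_one, smul_single, smul_eq_mul,
    inv_mul_cancel₀ h] at hmem

theorem Matrix.subalgebra_eq_top_of_single_mem (h : ∀ S T, single T S (1 : K) ∈ A) : A = ⊤ :=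
  eq_top_iff.2 fun W _ => by
    rw [matrix_eq_sum_single W]
    refine sum_mem fun T _ => sum_mem fun S _ => ?_
    simpa [smul_single] using A.smul_mem (h S T) (W T S)

end

namespace JordanWigner

variable {m : ℕ}

def boolSign (b : Bool) : ℝ := if b then -1 else 1

@[simp] theorem boolSign_not (b : Bool) : boolSign (!b) = -boolSign b := by
  cases b <;> simp [boolSign]

@[simp] theorem boolSign_mul_self (b : Bool) : boolSign b * boolSign b = 1 := by
  cases b <;> simp [boolSign]

def flipAt (i : Fin m) (S : Fin m → Bool) : Fin m → Bool := Function.update S i (!S i)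

@[simp] theorem flipAt_apply_self (i : Fin m) (S : Fin m → Bool) : flipAt i S i = !S i :=
  Function.update_self ..

theorem flipAt_apply_of_ne {i j : Fin m} (h : j ≠ i) (S : Fin m → Bool) : flipAt i S j = S j :=
  Function.update_of_ne h ..

@[simp] theorem flipAt_flipAt (i : Fin m) (S : Fin m → Bool) : flipAt i (flipAt i S) = S := by
  funext j
  by_cases h : j = i
  · subst h; simp
  · simp [flipAt_apply_of_ne h]

theorem flipAt_comm (i j : Fin m) (S : Fin m → Bool) :
    flipAt i (flipAt j S) = flipAt j (flipAt i S) := by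
  funext k
  by_cases hi : k = i <;> by_cases hj : k = j
  · subst hi hj; rfl
  · subst hi; simp [flipAt_apply_of_ne hj]
  · subst hj; simp [flipAt_apply_of_ne hi]
  · simp [flipAt_apply_of_ne hi, flipAt_apply_of_ne hj]

def string (i : Fin m) (S : Fin m → Bool) : ℝ := ∏ j ∈ Finset.Iio i, boolSign (S j)

theorem string_mul_self (i : Fin m) (S : Fin m → Bool) : string i S * string i S = 1 := by
  rw [string, ← Finset.prod_mul_distrib]
  exact Finset.prod_eq_one fun j _ => boolSign_mul_self (S j)

theorem string_flipAt_of_le {i j : Fin m} (h : i ≤ j) (S : Fin m → Bool) :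
    string i (flipAt j S) = string i S :=
  Finset.prod_congr rfl fun k hk =>
    by rw [flipAt_apply_of_ne ((Finset.mem_Iio.1 hk).trans_le h).ne]

theorem string_flipAt_of_lt {i j : Fin m} (h : j < i) (S : Fin m → Bool) :
    string i (flipAt j S) = -string i S := by
  have hj : j ∈ Finset.Iio i := Finset.mem_Iio.2 h
  rw [string, string, ← Finset.mul_prod_erase _ _ hj, ← Finset.mul_prod_erase _ _ hj,
    flipAt_apply_self, boolSign_not, neg_mul,
    Finset.prod_congr rfl fun k hk => by rw [flipAt_apply_of_ne (Finset.ne_of_mem_erase hk)]]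

def flipOp (i : Fin m) (u : (Fin m → Bool) → ℝ) : End ℝ ((Fin m → Bool) → ℝ) where
  toFun f S := u S * f (flipAt i S)
  map_add' _ _ := funext fun _ => mul_add ..
  map_smul' _ _ := funext fun _ => mul_left_comm ..

@[simp] theorem flipOp_apply (i : Fin m) (u : (Fin m → Bool) → ℝ) (f : (Fin m → Bool) → ℝ)
    (S : Fin m → Bool) : flipOp i u f S = u S * f (flipAt i S) := rfl

def site : Fin m ⊕ Fin m → Fin m
  | .inl i | .inr i => i

def coeff : Fin m ⊕ Fin m → (Fin m → Bool) → ℝ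
  | .inl i, S => string i S
  | .inr i, S => string i S * boolSign (S i)

def gen (k : Fin m ⊕ Fin m) : End ℝ ((Fin m → Bool) → ℝ) := flipOp (site k) (coeff k)

theorem coeff_flipAt_of_ne {j : Fin m} (k : Fin m ⊕ Fin m) (h : j ≠ site k) (S : Fin m → Bool) :
    coeff k (flipAt j S) = (if j < site k then -1 else 1) * coeff k S := by
  cases k with
  | inl i | inr i =>
    simp only [site, coeff] at h ⊢
    rcases h.lt_or_gt with hlt | hgt
    · simp [hlt, string_flipAt_of_lt hlt, flipAt_apply_of_ne h.symm]
    · simp [hgt.not_gt, string_flipAt_of_le hgt.le, flipAt_apply_of_ne h.symm]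

theorem gen_mul_self (k : Fin m ⊕ Fin m) :
    gen k * gen k = algebraMap ℝ _ (Sum.elim (fun _ => 1) (fun _ => -1) k) := by
  refine LinearMap.ext fun f => funext fun S => ?_
  rw [Algebra.algebraMap_eq_smul_one]
  cases k with
  | inl i => simp [gen, site, coeff, string_flipAt_of_le le_rfl, ← mul_assoc, string_mul_self]
  | inr i =>
    simp only [gen, site, coeff, Module.End.mul_apply, flipOp_apply, flipAt_flipAt,
      string_flipAt_of_le le_rfl, flipAt_apply_self, boolSign_not]
    simp only [Sum.elim_inr, LinearMap.smul_apply, Module.End.one_apply, Pi.smul_apply,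
      smul_eq_mul]
    linear_combination (-(boolSign (S i) * boolSign (S i) * f S)) * string_mul_self i S
      - f S * boolSign_mul_self (S i)

theorem gen_anticomm {k l : Fin m ⊕ Fin m} (h : k ≠ l) : gen k * gen l + gen l * gen k = 0 := by
  refine LinearMap.ext fun f => funext fun S => ?_
  simp only [gen, LinearMap.add_apply, Module.End.mul_apply, flipOp_apply, Pi.add_apply,
    LinearMap.zero_apply, Pi.zero_apply]
  by_cases hs : site k = site l
  · rw [hs, flipAt_flipAt]
    rcases k with i | i <;> rcases l with j | j <;> simp only [site] at hs <;> subst hs <;>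
      simp_all [site, coeff, string_flipAt_of_le le_rfl] <;> ring
  · rw [flipAt_comm, coeff_flipAt_of_ne l hs, coeff_flipAt_of_ne k (Ne.symm hs)]
    rcases (Ne.symm hs).lt_or_gt with hlt | hgt
    · simp [hlt, hlt.not_gt]; ring
    · simp [hgt, hgt.not_gt]; ring

theorem single_mem_of_flipAt_mem {K : Type*} [Field K]
    {A : Subalgebra K (Matrix (Fin m → Bool) (Fin m → Bool) K)}
    (hdiag : ∀ S, single S S (1 : K) ∈ A) (hflip : ∀ i S, single (flipAt i S) S (1 : K) ∈ A)
    (S T : Fin m → Bool) : single T S (1 : K) ∈ A := by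
  suffices h : ∀ s : Finset (Fin m), ∀ T, (∀ j ∉ s, T j = S j) → single T S (1 : K) ∈ A from
    h Finset.univ T (by simp)
  intro s
  induction s using Finset.induction_on with
  | empty =>
    intro T hT
    rw [show T = S from funext fun j => hT j (Finset.notMem_empty j)]
    exact hdiag S
  | insert i s hi ih =>
    intro T hT
    by_cases hTi : T i = S i
    · refine ih T fun j hj => ?_
      by_cases hji : j = i
      · rwa [hji]
      · exact hT j (by simp [hji, hj])
    · have hT' : single (flipAt i T) S (1 : K) ∈ A := by
        refine ih _ fun j hj => ?_
        by_cases hji : j = i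
        · subst hji; simpa [Bool.eq_not_iff] using hTi
        · rw [flipAt_apply_of_ne hji]; exact hT j (by simp [hji, hj])
      have hmem := A.mul_mem (flipAt_flipAt i T ▸ hflip i (flipAt i T)) hT'
      rwa [single_mul_single_same, mul_one] at hmem

theorem toMatrix_gen_inr_mul_gen_inl (i : Fin m) :
    LinearMap.toMatrixAlgEquiv' (gen (.inr i) * gen (.inl i)) =
      diagonal fun T => boolSign (T i) := by
  ext T S
  simp only [LinearMap.toMatrixAlgEquiv'_apply, Module.End.mul_apply, gen, site, coeff,
    flipOp_apply, flipAt_flipAt, string_flipAt_of_le le_rfl, diagonal_apply, Pi.single_apply]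
  split_ifs
  · linear_combination boolSign (T i) * string_mul_self i T
  · ring

theorem pi_single_eq_prod (S : Fin m → Bool) :
    (Pi.single S 1 : (Fin m → Bool) → ℝ) =
      ∏ i, (2⁻¹ : ℝ) • (1 + boolSign (S i) • fun T => boolSign (T i)) := by
  have hfactor : ∀ a b : Bool,
      (2⁻¹ : ℝ) * (1 + boolSign a * boolSign b) = if b = a then 1 else 0 := by
    intro a b
    cases a <;> cases b <;> norm_num [boolSign]
  funext T
  simp only [Finset.prod_apply, Pi.smul_apply, Pi.add_apply, Pi.one_apply, smul_eq_mul, hfactor,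
    Finset.prod_boole, Finset.mem_univ, true_implies]
  by_cases h : T = S
  · simp [h]
  · simpa [h] using Function.ne_iff.1 h

theorem toMatrix_gen_inl_apply_flipAt (i : Fin m) (S : Fin m → Bool) :
    LinearMap.toMatrixAlgEquiv' (gen (.inl i)) (flipAt i S) S = string i S := by
  simp [LinearMap.toMatrixAlgEquiv'_apply, gen, site, coeff, string_flipAt_of_le le_rfl]

theorem adjoin_range_gen : Algebra.adjoin ℝ (Set.range (gen (m := m))) = ⊤ := by
  set B := Algebra.adjoin ℝ (Set.range (gen (m := m)))
  let A := B.comap (Matrix.toLinAlgEquiv' : Matrix _ _ ℝ ≃ₐ[ℝ] _).toAlgHom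
  have hA : ∀ g ∈ B, LinearMap.toMatrixAlgEquiv' g ∈ A := fun g hg => by
    simpa [A] using hg
  have hgen : ∀ k, LinearMap.toMatrixAlgEquiv' (gen k) ∈ A :=
    fun k => hA _ (Algebra.subset_adjoin ⟨k, rfl⟩)
  have hdiag : ∀ S, single S S (1 : ℝ) ∈ A := by
    intro S
    let D := A.comap (diagonalAlgHom ℝ : ((Fin m → Bool) → ℝ) →ₐ[ℝ] Matrix _ _ ℝ)
    have hz : ∀ i, (fun T => boolSign (T i)) ∈ D := fun i => by
      rw [Subalgebra.mem_comap, diagonalAlgHom_apply, ← toMatrix_gen_inr_mul_gen_inl, map_mul]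
      exact A.mul_mem (hgen _) (hgen _)
    have hS : Pi.single S 1 ∈ D := by
      rw [pi_single_eq_prod]
      exact prod_mem fun i _ => D.smul_mem (add_mem (one_mem _) (D.smul_mem (hz i) _)) _
    rw [← diagonal_single]
    exact hS
  have hflip : ∀ i S, single (flipAt i S) S (1 : ℝ) ∈ A := fun i S =>
    single_mem_of_apply_ne_zero hdiag (hgen (.inl i)) <| by
      rw [toMatrix_gen_inl_apply_flipAt]
      exact left_ne_zero_of_mul_eq_one (string_mul_self i S)
  have hAtop := subalgebra_eq_top_of_single_mem (single_mem_of_flipAt_mem hdiag hflip)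
  refine eq_top_iff.2 fun g _ => ?_
  have hg : LinearMap.toMatrixAlgEquiv' g ∈ A := hAtop ▸ Algebra.mem_top
  simpa [A] using hg

noncomputable def cliffordHom (m : ℕ) :
    CliffordAlgebra (splitForm m) →ₐ[ℝ] End ℝ ((Fin m → Bool) → ℝ) :=
  CliffordAlgebra.liftOfAnticomm gen gen_mul_self fun _ _ => gen_anticomm

theorem cliffordHom_bijective : Function.Bijective (cliffordHom m) := by
  have hsurj : Function.Surjective (cliffordHom m) :=
    CliffordAlgebra.liftOfAnticomm_surjective _ _ _ adjoin_range_gen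
  have hdim : finrank ℝ (CliffordAlgebra (splitForm m)) =
      finrank ℝ (End ℝ ((Fin m → Bool) → ℝ)) := by
    rw [CliffordAlgebra.finrank_eq_two_pow, finrank_linearMap, finrank_fintype_fun_eq_card,
      finrank_fintype_fun_eq_card]
    simp [← pow_add]
  have : FiniteDimensional ℝ (CliffordAlgebra (splitForm m)) :=
    Module.finite_of_finrank_pos (by rw [hdim]; exact finrank_pos)
  exact ⟨(LinearMap.injective_iff_surjective_of_finrank_eq_finrank hdim
    (f := (cliffordHom m).toLinearMap)).2 hsurj, hsurj⟩

noncomputable def cliffordEquiv (m : ℕ) :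
    CliffordAlgebra (splitForm m) ≃ₐ[ℝ] End ℝ ((Fin m → Bool) → ℝ) :=
  AlgEquiv.ofBijective _ cliffordHom_bijective

end JordanWigner

/-- Every simple module over the real Clifford algebra `Cliff_{m,m}` of the split form of
signature `(m, m)` has real dimension `2^m` (after restriction of scalars along
`ℝ → Cliff_{m,m}`). -/
theorem simpleModule_cliffordAlgebra_split_finrank (m : ℕ) (M : Type)
    [AddCommGroup M] [Module (CliffordAlgebra (splitForm m)) M]
    [Module ℝ M] [IsScalarTower ℝ (CliffordAlgebra (splitForm m)) M]
    [IsSimpleModule (CliffordAlgebra (splitForm m)) M] :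
    Module.finrank ℝ M = 2 ^ m := by
  rw [(JordanWigner.cliffordEquiv m).finrank_eq_of_isSimpleModule, finrank_fintype_fun_eq_card]
  simp
end
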